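/- arXiv:math/9911124 — 5 statements merged into one kernel-verified Lean document; each statement's English description precedes it below -/
import Mathlib

section
/- Let M be a unital C*-algebra, τ a faithful tracial state on M, h ∈ M a positive element, and define φ(x) = τ(hx) for x ∈ M. Then every element a ∈ M that commutes with all elements of the centralizer M^φ belongs to M^φ; in particular, if M^φ is commutative, then M^φ is a maximal abelian *-subalgebra of M. -/
open scoped ComplexOrder

/-- The centralizer of a functional `φ`, as a subset of the algebra. -/
def centralizerSet {A : Type*} [Mul A] (φ : A → ℂ) : Set A :=
  {x | ∀ y : A, φ (x * y) = φ (y * x)}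

theorem stmt7 {M : Type*} [CStarAlgebra M] [PartialOrder M] [StarOrderedRing M]
    -- `τ` is a faithful tracial state on `M`
    (τ : M →ₗ[ℂ] ℂ) (hτ1 : τ 1 = 1) (hτpos : ∀ x : M, 0 ≤ τ (star x * x))
    (hτtr : ∀ x y : M, τ (x * y) = τ (y * x))
    (hτfaith : ∀ x : M, τ (star x * x) = 0 → x = 0)
    -- `h` is a positive element and `φ x = τ (h x)`
    (h : M) (hh : 0 ≤ h)
    (φ : M → ℂ) (hφ : ∀ x, φ x = τ (h * x)) :
    -- every element commuting with all of `M^φ` belongs to `M^φ`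
    (∀ a : M, (∀ x ∈ centralizerSet φ, a * x = x * a) → a ∈ centralizerSet φ) ∧
    -- in particular, if `M^φ` is commutative then it is a maximal abelian *-subalgebra
    ((∀ x ∈ centralizerSet φ, ∀ y ∈ centralizerSet φ, x * y = y * x) →
      (1 : M) ∈ centralizerSet φ ∧
      (∀ x ∈ centralizerSet φ, ∀ y ∈ centralizerSet φ, x + y ∈ centralizerSet φ) ∧
      (∀ c : ℂ, ∀ x ∈ centralizerSet φ, c • x ∈ centralizerSet φ) ∧
      (∀ x ∈ centralizerSet φ, ∀ y ∈ centralizerSet φ, x * y ∈ centralizerSet φ) ∧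
      (∀ x ∈ centralizerSet φ, star x ∈ centralizerSet φ) ∧
      (∀ x ∈ centralizerSet φ, ∀ y ∈ centralizerSet φ, x * y = y * x) ∧
      (∀ a : M, (∀ x ∈ centralizerSet φ, a * x = x * a) → a ∈ centralizerSet φ)) := by
 -- key: τ vanishing against everything implies zero
  have key : ∀ z : M, (∀ y : M, τ (z * y) = 0) → z = 0 := by
    intro z hz
    apply hτfaith
    rw [hτtr]
    exact hz (star z)
  have mem_iff : ∀ x : M, x ∈ centralizerSet φ ↔ h * x = x * h := by
    intro x
    constructor
    · intro hx
      have hz : ∀ y : M, τ ((h * x - x * h) * y) = 0 := by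
        intro y
        have h1 := hx y
        rw [hφ, hφ] at h1
        have h2 : τ (x * h * y) = τ (h * (y * x)) := by
          rw [hτtr, ← mul_assoc, hτtr]
        rw [sub_mul, map_sub, mul_assoc, h1, ← h2]
        ring
      have := key _ hz
      linear_combination (norm := noncomm_ring) this
    · intro hx y
      rw [hφ, hφ]
      calc τ (h * (x * y)) = τ (x * h * y) := by rw [← mul_assoc, hx]
        _ = τ (y * (x * h)) := by rw [hτtr]
        _ = τ (h * (y * x)) := by rw [← mul_assoc, hτtr]
  have part1 : ∀ a : M, (∀ x ∈ centralizerSet φ, a * x = x * a) → a ∈ centralizerSet φ := by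
    intro a ha
    have hmem : h ∈ centralizerSet φ := (mem_iff h).2 rfl
    exact (mem_iff a).2 (ha h hmem).symm
  refine ⟨part1, fun hcomm => ?_⟩
  refine ⟨(mem_iff 1).2 (by simp), ?_, ?_, ?_, ?_, hcomm, part1⟩
  · intro x hx y hy
    rw [mem_iff] at *
    rw [mul_add, add_mul, hx, hy]
  · intro c x hx
    rw [mem_iff] at *
    rw [mul_smul_comm, smul_mul_assoc, hx]
  · intro x hx y hy
    rw [mem_iff] at *
    rw [← mul_assoc, hx, mul_assoc, hy, mul_assoc]
  · intro x hx
    rw [mem_iff] at *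
    have hsa : star h = h := (IsSelfAdjoint.of_nonneg hh).star_eq
    calc h * star x = star (x * h) := by rw [star_mul, hsa]
      _ = star (h * x) := by rw [hx]
      _ = star x * h := by rw [star_mul, hsa]
end

section
/- Let M be a unital C*-algebra, N ⊆ M a unital C*-subalgebra, and F : M → N a conditional expectation. Suppose there exists a sequence (a_n) in M with 0 ≤ a_n ≤ 1, ‖a_n‖ = 1, and ‖F(a_n)‖ → 0 (which holds whenever F has infinite index). Then there exists a sequence of unitaries u_n ∈ M such that ‖u_n − 1‖_F → 0, while there is no sequence of unitaries v_n ∈ N with ‖u_n v_n − 1‖ → 0. Consequently the topologies induced on the coset space U_M/U_N by the norm ‖·‖ of M and by the modular norm ‖·‖_F are not equivalent. -/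
/-!
Take `u = e^{iπa}` for `0 ≤ a ≤ 1` with `‖a‖ = 1`. Then `(u - 1)^*(u - 1) = 2 - 2 cos(πa) ≤ π² a`,
so `‖u - 1‖_F ≤ π ‖F(a)‖^{1/2}`, while `1 ∈ σ(a)` forces `‖u - 1‖ = 2`. For a unitary `v ∈ N`,
going from `u` to `1` through `v*` and `F(u)` gives `‖u - 1‖ ≤ 2‖uv - 1‖ + ‖u - 1‖_F`, since `F`
fixes `v*` and is contractive for `‖·‖` and from `‖·‖_F` to `‖·‖` (Kadison–Schwarz).
Hence `u_n U_N → U_N` for `‖·‖_F` but not for `‖·‖`.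
-/

open Filter Topology

section PositiveMap

variable {A B : Type*} [CStarAlgebra A] [PartialOrder A] [StarOrderedRing A]
  [CStarAlgebra B] [PartialOrder B] [StarOrderedRing B]

lemma map_star_of_map_nonneg (F : A →ₗ[ℂ] B) (hF : ∀ x, 0 ≤ x → 0 ≤ F x) (x : A) :
    F (star x) = star (F x) := by
  have hsa : ∀ y : A, IsSelfAdjoint y → IsSelfAdjoint (F y) := fun y hy => by
    rw [← CFC.posPart_sub_negPart y hy, map_sub]
    exact (hF _ (CFC.posPart_nonneg y)).isSelfAdjoint.sub
      (hF _ (CFC.negPart_nonneg y)).isSelfAdjoint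
  rw [← realPart_add_I_smul_imaginaryPart x]
  simp only [star_add, star_smul, map_add, map_smul, (realPart x).prop.star_eq,
    (imaginaryPart x).prop.star_eq, (hsa _ (realPart x).prop).star_eq,
    (hsa _ (imaginaryPart x).prop).star_eq]

end PositiveMap

section ExpIPi

open Real

variable {A : Type*} [CStarAlgebra A]

lemma two_sub_two_mul_cos_pi_mul_le {t : ℝ} (ht0 : 0 ≤ t) (ht1 : t ≤ 1) :
    2 - 2 * cos (π * t) ≤ π ^ 2 * t := by
  have := one_sub_sq_div_two_le_cos (x := π * t)
  nlinarith [sq_nonneg π, mul_nonneg ht0 (sub_nonneg.mpr ht1)]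

lemma I_smul_mul_I_smul (s : A) : (Complex.I • s) * (Complex.I • s) = -(s * s) := by
  rw [smul_mul_smul_comm, Complex.I_mul_I, neg_one_smul]

lemma sub_I_smul_mul_add_I_smul {c s : A} (h : Commute c s) :
    (c - Complex.I • s) * (c + Complex.I • s) = c * c + s * s := by
  rw [sub_mul, mul_add, mul_add, (h.smul_right Complex.I).eq, I_smul_mul_I_smul]
  abel

lemma add_I_smul_mul_sub_I_smul {c s : A} (h : Commute c s) :
    (c + Complex.I • s) * (c - Complex.I • s) = c * c + s * s := by
  rw [add_mul, mul_sub, mul_sub, (h.smul_right Complex.I).eq, I_smul_mul_I_smul]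
  abel

/-- `e^{iπb}`, written as `cos(πb) + i sin(πb)` in the real functional calculus. -/
noncomputable def expIPi (b : A) : A :=
  cfc (fun t => cos (π * t)) b + Complex.I • cfc (fun t => sin (π * t)) b

lemma star_expIPi (b : A) :
    star (expIPi b) = cfc (fun t => cos (π * t)) b - Complex.I • cfc (fun t => sin (π * t)) b := by
  simp [expIPi, star_smul, (cfc_predicate _ b : IsSelfAdjoint (cfc _ b)).star_eq, sub_eq_add_neg]

lemma cfc_cos_mul_self_add_cfc_sin_mul_self {b : A} (hb : IsSelfAdjoint b) :
    cfc (fun t => cos (π * t)) b * cfc (fun t => cos (π * t)) b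
      + cfc (fun t => sin (π * t)) b * cfc (fun t => sin (π * t)) b = 1 := by
  rw [← cfc_mul .., ← cfc_mul .., ← cfc_add .., ← cfc_one ℝ b]
  exact cfc_congr fun t _ => by simpa [sq] using cos_sq_add_sin_sq (π * t)

lemma expIPi_mem_unitary {b : A} (hb : IsSelfAdjoint b) : expIPi b ∈ unitary A := by
  have h := cfc_commute_cfc (fun t => cos (π * t)) (fun t => sin (π * t)) b
  rw [Unitary.mem_iff, star_expIPi, expIPi, sub_I_smul_mul_add_I_smul h,
    add_I_smul_mul_sub_I_smul h, cfc_cos_mul_self_add_cfc_sin_mul_self hb]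
  exact ⟨rfl, rfl⟩

lemma star_expIPi_sub_one_mul {b : A} (hb : IsSelfAdjoint b) :
    star (expIPi b - 1) * (expIPi b - 1) = cfc (fun t => 2 - 2 * cos (π * t)) b := by
  have hu := (Unitary.mem_iff.mp (expIPi_mem_unitary hb)).1
  have : star (expIPi b - 1) * (expIPi b - 1) = 2 - (star (expIPi b) + expIPi b) := by
    simp only [star_sub, star_one, sub_mul, mul_sub, hu, mul_one, one_mul, ← one_add_one_eq_two]
    abel
  rw [this, star_expIPi, expIPi, cfc_sub .., cfc_const_mul .., cfc_const (2 : ℝ) b]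
  simp [two_smul, map_ofNat]

lemma star_expIPi_sub_one_mul_le [PartialOrder A] [StarOrderedRing A] {b : A} (hb0 : 0 ≤ b)
    (hb1 : b ≤ 1) : star (expIPi b - 1) * (expIPi b - 1) ≤ π ^ 2 • b := by
  rw [star_expIPi_sub_one_mul hb0.isSelfAdjoint, ← cfc_const_mul_id (π ^ 2) b]
  have hspec : ∀ t ∈ spectrum ℝ b, t ≤ 1 :=
    (le_algebraMap_iff_spectrum_le (a := b) (r := (1 : ℝ))).mp (by simpa using hb1)
  exact cfc_mono fun t ht =>
    two_sub_two_mul_cos_pi_mul_le (spectrum_nonneg_of_nonneg hb0 ht) (hspec t ht)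

lemma two_le_norm_expIPi_sub_one [PartialOrder A] [StarOrderedRing A] {b : A} (hb0 : 0 ≤ b)
    (hb : ‖b‖ = 1) : 2 ≤ ‖expIPi b - 1‖ := by
  have : Nontrivial A := nontrivial_of_ne b 0 fun h => by simp [h] at hb
  have h4 : (4 : ℝ) ∈ spectrum ℝ (star (expIPi b - 1) * (expIPi b - 1)) := by
    rw [star_expIPi_sub_one_mul hb0.isSelfAdjoint, cfc_map_spectrum ..]
    exact ⟨1, hb ▸ CStarAlgebra.norm_mem_spectrum_of_nonneg hb0, by norm_num⟩
  have := spectrum.norm_le_norm_of_mem h4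
  rw [CStarRing.norm_star_mul_self, Real.norm_ofNat] at this
  nlinarith [norm_nonneg (expIPi b - 1)]

end ExpIPi

structure IsConditionalExpectation {M : Type*} [CStarAlgebra M] [PartialOrder M]
    (N : StarSubalgebra ℂ M) (F : M →ₗ[ℂ] M) : Prop where
  apply_mem : ∀ x, F x ∈ N
  apply_of_mem : ∀ b ∈ N, F b = b
  apply_nonneg : ∀ x, 0 ≤ x → 0 ≤ F x
  apply_mul_mul : ∀ x, ∀ b ∈ N, ∀ c ∈ N, F (b * x * c) = b * F x * c

noncomputable def modularNorm {M : Type*} [CStarAlgebra M] (F : M →ₗ[ℂ] M) (x : M) : ℝ :=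
  √‖F (star x * x)‖

lemma modularNorm_nonneg {M : Type*} [CStarAlgebra M] {F : M →ₗ[ℂ] M} (x : M) :
    0 ≤ modularNorm F x :=
  Real.sqrt_nonneg _

namespace IsConditionalExpectation

variable {M : Type*} [CStarAlgebra M] [PartialOrder M] [StarOrderedRing M]
  {N : StarSubalgebra ℂ M} {F : M →ₗ[ℂ] M}

lemma map_star (hF : IsConditionalExpectation N F) (x : M) : F (star x) = star (F x) :=
  map_star_of_map_nonneg F hF.apply_nonneg x

lemma mono (hF : IsConditionalExpectation N F) {x y : M} (h : x ≤ y) : F x ≤ F y := by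
  simpa using hF.apply_nonneg _ (sub_nonneg.mpr h)

lemma norm_apply_le_of_nonneg (hF : IsConditionalExpectation N F) {y : M} (hy : 0 ≤ y) :
    ‖F y‖ ≤ ‖y‖ := by
  have hscalar : F (algebraMap ℝ M ‖y‖) = algebraMap ℝ M ‖y‖ := by
    refine hF.apply_of_mem _ ?_
    rw [IsScalarTower.algebraMap_apply ℝ ℂ M]
    exact N.algebraMap_mem _
  rw [CStarAlgebra.norm_le_iff_le_algebraMap _ (norm_nonneg y) (hF.apply_nonneg y hy), ← hscalar]
  exact hF.mono ((CStarAlgebra.norm_le_iff_le_algebraMap y (norm_nonneg y) hy).mp le_rfl)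

/-- Kadison–Schwarz: by the bimodule property, `F((x - F x)* (x - F x)) = F(x* x) - F(x)* F(x)`. -/
lemma star_apply_mul_apply_le (hF : IsConditionalExpectation N F) (x : M) :
    star (F x) * F x ≤ F (star x * x) := by
  have hFx := hF.apply_mem x
  have h1 : F (star x * F x) = star (F x) * F x := by
    simpa [hF.map_star] using hF.apply_mul_mul (star x) 1 N.one_mem (F x) hFx
  have h2 : F (star (F x) * x) = star (F x) * F x := by
    simpa using hF.apply_mul_mul x (star (F x)) (star_mem hFx) 1 N.one_mem
  have h3 : F (star (F x) * F x) = star (F x) * F x :=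
    hF.apply_of_mem _ (mul_mem (star_mem hFx) hFx)
  have key := hF.apply_nonneg _ (star_mul_self_nonneg (x - F x))
  simp only [star_sub, sub_mul, mul_sub, map_sub, h1, h2, h3] at key
  rw [← sub_nonneg]
  convert key using 1
  abel

lemma norm_apply_le_modularNorm (hF : IsConditionalExpectation N F) (x : M) :
    ‖F x‖ ≤ modularNorm F x := by
  refine Real.le_sqrt_of_sq_le ?_
  rw [sq, ← CStarRing.norm_star_mul_self]
  exact CStarAlgebra.norm_le_norm_of_nonneg_of_le (star_mul_self_nonneg _)
    (hF.star_apply_mul_apply_le x)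

lemma norm_apply_le (hF : IsConditionalExpectation N F) (x : M) : ‖F x‖ ≤ ‖x‖ := by
  calc ‖F x‖ ≤ √‖F (star x * x)‖ := hF.norm_apply_le_modularNorm x
    _ ≤ √‖star x * x‖ := Real.sqrt_le_sqrt (hF.norm_apply_le_of_nonneg (star_mul_self_nonneg x))
    _ = ‖x‖ := by rw [CStarRing.norm_star_mul_self, Real.sqrt_mul_self (norm_nonneg x)]

lemma modularNorm_le_of_star_mul_self_le (hF : IsConditionalExpectation N F) {x y : M} {r : ℝ}
    (h : star x * x ≤ r ^ 2 • y) : modularNorm F x ≤ |r| * √‖F y‖ := by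
  have hle : F (star x * x) ≤ r ^ 2 • F y := by simpa using hF.mono h
  calc modularNorm F x ≤ √‖r ^ 2 • F y‖ := Real.sqrt_le_sqrt
        (CStarAlgebra.norm_le_norm_of_nonneg_of_le (hF.apply_nonneg _ (star_mul_self_nonneg x)) hle)
    _ = |r| * √‖F y‖ := by
        rw [norm_smul, Real.sqrt_mul (norm_nonneg _), Real.norm_eq_abs, abs_pow,
          Real.sqrt_sq_eq_abs, abs_abs]

lemma norm_sub_one_le (hF : IsConditionalExpectation N F) (u : M) {v : M} (hvN : v ∈ N)
    (hv : v ∈ unitary M) : ‖u - 1‖ ≤ 2 * ‖u * v - 1‖ + modularNorm F (u - 1) := by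
  have h1 : ‖u - star v‖ ≤ ‖u * v - 1‖ := by
    rw [← CStarRing.norm_mul_mem_unitary (u - star v) hv, sub_mul, Unitary.star_mul_self_of_mem hv]
  have h2 : ‖star v - F u‖ ≤ ‖u * v - 1‖ := by
    calc ‖star v - F u‖ = ‖F (star v - u)‖ := by rw [map_sub, hF.apply_of_mem _ (star_mem hvN)]
      _ ≤ ‖u - star v‖ := (hF.norm_apply_le _).trans_eq (norm_sub_rev _ _)
      _ ≤ ‖u * v - 1‖ := h1
  have h3 : ‖F u - 1‖ ≤ modularNorm F (u - 1) := by
    rw [show F u - 1 = F (u - 1) by rw [map_sub, hF.apply_of_mem 1 N.one_mem]]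
    exact hF.norm_apply_le_modularNorm _
  calc ‖u - 1‖ = ‖(u - star v) + (star v - F u) + (F u - 1)‖ := by abel_nf
    _ ≤ ‖u - star v‖ + ‖star v - F u‖ + ‖F u - 1‖ := norm_add₃_le
    _ ≤ 2 * ‖u * v - 1‖ + modularNorm F (u - 1) := by linarith

lemma not_exists_tendsto_norm_mul_sub_one (hF : IsConditionalExpectation N F) {u : ℕ → M}
    (hu : ∀ n, 2 ≤ ‖u n - 1‖) (huF : Tendsto (fun n => modularNorm F (u n - 1)) atTop (𝓝 0)) :
    ¬ ∃ v : ℕ → M, (∀ n, v n ∈ N ∧ v n ∈ unitary M) ∧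
      Tendsto (fun n => ‖u n * v n - 1‖) atTop (𝓝 0) := by
  rintro ⟨v, hv, hlim⟩
  have hsum : Tendsto (fun n => 2 * ‖u n * v n - 1‖ + modularNorm F (u n - 1)) atTop (𝓝 0) := by
    simpa using (hlim.const_mul 2).add huF
  have : (2 : ℝ) ≤ 0 := ge_of_tendsto hsum (Eventually.of_forall fun n =>
    (hu n).trans (hF.norm_sub_one_le (u n) (hv n).1 (hv n).2))
  norm_num at this

end IsConditionalExpectation

section CosetDistance

variable {M : Type*} [CStarAlgebra M] (N : StarSubalgebra ℂ M)

/-- The distance between the cosets `x U_N` and `y U_N` induced by the length function `d`. -/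
noncomputable def cosetDist (d : M → ℝ) (x y : M) : ℝ :=
  sInf {r : ℝ | ∃ v v' : M, (v ∈ N ∧ v ∈ unitary M) ∧ (v' ∈ N ∧ v' ∈ unitary M) ∧
    r = d (x * v - y * v')}

variable {N}

lemma cosetDist_nonneg {d : M → ℝ} (hd : ∀ z, 0 ≤ d z) (x y : M) : 0 ≤ cosetDist N d x y :=
  Real.sInf_nonneg <| by rintro r ⟨v, v', -, -, rfl⟩; exact hd _

lemma cosetDist_le {d : M → ℝ} (hd : ∀ z, 0 ≤ d z) (x y : M) : cosetDist N d x y ≤ d (x - y) :=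
  csInf_le ⟨0, by rintro r ⟨v, v', -, -, rfl⟩; exact hd _⟩
    ⟨1, 1, ⟨N.one_mem, one_mem _⟩, ⟨N.one_mem, one_mem _⟩, by simp⟩

lemma exists_norm_mul_sub_lt_cosetDist_add (x y : M) {ε : ℝ} (hε : 0 < ε) :
    ∃ w : M, (w ∈ N ∧ w ∈ unitary M) ∧ ‖x * w - y‖ < cosetDist N (‖·‖) x y + ε := by
  obtain ⟨r, ⟨v, v', ⟨hvN, hv⟩, ⟨hv'N, hv'⟩, rfl⟩, hlt⟩ := Real.lt_sInf_add_pos (s := {r : ℝ |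
    ∃ v v' : M, (v ∈ N ∧ v ∈ unitary M) ∧ (v' ∈ N ∧ v' ∈ unitary M) ∧ r = ‖x * v - y * v'‖})
    ⟨_, 1, 1, ⟨N.one_mem, one_mem _⟩, ⟨N.one_mem, one_mem _⟩, rfl⟩ hε
  refine ⟨v * star v', ⟨mul_mem hvN (star_mem hv'N), mul_mem hv (Unitary.star_mem hv')⟩, ?_⟩
  rwa [← CStarRing.norm_mul_mem_unitary (x * v - y * v') (Unitary.star_mem hv'), sub_mul,
    mul_assoc, mul_assoc, Unitary.mul_star_self_of_mem hv', mul_one] at hlt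

lemma exists_tendsto_norm_mul_sub_of_tendsto_cosetDist {u : ℕ → M} {y : M}
    (h : Tendsto (fun n => cosetDist N (‖·‖) (u n) y) atTop (𝓝 0)) :
    ∃ w : ℕ → M, (∀ n, w n ∈ N ∧ w n ∈ unitary M) ∧
      Tendsto (fun n => ‖u n * w n - y‖) atTop (𝓝 0) := by
  choose w hw hlt using fun n : ℕ =>
    exists_norm_mul_sub_lt_cosetDist_add (N := N) (u n) y (Nat.one_div_pos_of_nat (n := n))
  refine ⟨w, hw, squeeze_zero (fun n => norm_nonneg _) (fun n => (hlt n).le) ?_⟩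
  simpa using h.add tendsto_one_div_add_atTop_nhds_zero_nat

end CosetDistance

theorem stmt11_general {M : Type*} [CStarAlgebra M] [PartialOrder M] [StarOrderedRing M]
    -- `N` is a unital C*-subalgebra of `M`
    (N : StarSubalgebra ℂ M)
    -- `F` is a conditional expectation onto `N`
    (F : M →ₗ[ℂ] M) (hFrange : ∀ x : M, F x ∈ N) (hFid : ∀ b ∈ N, F b = b)
    (hFpos : ∀ x : M, 0 ≤ x → 0 ≤ F x)
    (hFbimod : ∀ x : M, ∀ b ∈ N, ∀ c ∈ N, F (b * x * c) = b * F x * c)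
    -- a sequence as produced by infinite index
    (a : ℕ → M) (ha0 : ∀ n, 0 ≤ a n) (ha1 : ∀ n, a n ≤ 1) (hna : ∀ n, ‖a n‖ = 1)
    (hFa : Tendsto (fun n => ‖F (a n)‖) atTop (nhds 0)) :
    -- there are unitaries `u n` with `‖u n - 1‖_F → 0` but no unitaries `v n` in `N`
    -- with `‖u n * v n - 1‖ → 0`
    (∃ u : ℕ → M, (∀ n, u n ∈ unitary M) ∧
      Tendsto (fun n => Real.sqrt ‖F (star (u n - 1) * (u n - 1))‖) atTop (nhds 0) ∧
      ¬ ∃ v : ℕ → M, (∀ n, v n ∈ N ∧ v n ∈ unitary M) ∧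
        Tendsto (fun n => ‖u n * v n - 1‖) atTop (nhds 0)) ∧
    -- consequently, the quotient topologies on `U_M / U_N` induced by `‖·‖` and `‖·‖_F`
    -- are not equivalent: they do not have the same convergent sequences of cosets
    ¬ (∀ u : ℕ → M, (∀ n, u n ∈ unitary M) → ∀ w ∈ unitary M,
        (Tendsto (fun n => sInf {r : ℝ | ∃ v v' : M,
            (v ∈ N ∧ v ∈ unitary M) ∧ (v' ∈ N ∧ v' ∈ unitary M) ∧
            r = ‖u n * v - w * v'‖}) atTop (nhds 0) ↔
         Tendsto (fun n => sInf {r : ℝ | ∃ v v' : M,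
            (v ∈ N ∧ v ∈ unitary M) ∧ (v' ∈ N ∧ v' ∈ unitary M) ∧
            r = Real.sqrt ‖F (star (u n * v - w * v') * (u n * v - w * v'))‖}) atTop
            (nhds 0))) := by
  have hF : IsConditionalExpectation N F := ⟨hFrange, hFid, hFpos, hFbimod⟩
  set u : ℕ → M := fun n => expIPi (a n)
  have hu : ∀ n, u n ∈ unitary M := fun n => expIPi_mem_unitary (ha0 n).isSelfAdjoint
  have huF : Tendsto (fun n => modularNorm F (u n - 1)) atTop (𝓝 0) := by
    refine squeeze_zero (fun n => modularNorm_nonneg _) (fun n =>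
      hF.modularNorm_le_of_star_mul_self_le (star_expIPi_sub_one_mul_le (ha0 n) (ha1 n))) ?_
    simpa using hFa.sqrt.const_mul |Real.pi|
  have hno := hF.not_exists_tendsto_norm_mul_sub_one
    (fun n => two_le_norm_expIPi_sub_one (ha0 n) (hna n)) huF
  refine ⟨⟨u, hu, huF, hno⟩, fun h => hno ?_⟩
  have hdist : Tendsto (fun n => cosetDist N (‖·‖) (u n) 1) atTop (𝓝 0) ↔
      Tendsto (fun n => cosetDist N (modularNorm F) (u n) 1) atTop (𝓝 0) := h u hu 1 (one_mem _)
  refine exists_tendsto_norm_mul_sub_of_tendsto_cosetDist (hdist.mpr ?_)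
  exact squeeze_zero (fun n => cosetDist_nonneg modularNorm_nonneg _ _)
    (fun n => cosetDist_le modularNorm_nonneg _ _) huF

theorem stmt11 {M : Type*} [CStarAlgebra M] [PartialOrder M] [StarOrderedRing M]
    -- `N` is a unital C*-subalgebra of `M`
    (N : StarSubalgebra ℂ M) (hNclosed : IsClosed (N : Set M))
    -- `F` is a conditional expectation onto `N`
    (F : M →ₗ[ℂ] M) (hFrange : ∀ x : M, F x ∈ N) (hFid : ∀ b ∈ N, F b = b)
    (hFpos : ∀ x : M, 0 ≤ x → 0 ≤ F x)
    (hFbimod : ∀ x : M, ∀ b ∈ N, ∀ c ∈ N, F (b * x * c) = b * F x * c)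
    -- a sequence as produced by infinite index
    (a : ℕ → M) (ha0 : ∀ n, 0 ≤ a n) (ha1 : ∀ n, a n ≤ 1) (hna : ∀ n, ‖a n‖ = 1)
    (hFa : Tendsto (fun n => ‖F (a n)‖) atTop (nhds 0)) :
    -- there are unitaries `u n` with `‖u n - 1‖_F → 0` but no unitaries `v n` in `N`
    -- with `‖u n * v n - 1‖ → 0`
    (∃ u : ℕ → M, (∀ n, u n ∈ unitary M) ∧
      Tendsto (fun n => Real.sqrt ‖F (star (u n - 1) * (u n - 1))‖) atTop (nhds 0) ∧
      ¬ ∃ v : ℕ → M, (∀ n, v n ∈ N ∧ v n ∈ unitary M) ∧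
        Tendsto (fun n => ‖u n * v n - 1‖) atTop (nhds 0)) ∧
    -- consequently, the quotient topologies on `U_M / U_N` induced by `‖·‖` and `‖·‖_F`
    -- are not equivalent: they do not have the same convergent sequences of cosets
    ¬ (∀ u : ℕ → M, (∀ n, u n ∈ unitary M) → ∀ w ∈ unitary M,
        (Tendsto (fun n => sInf {r : ℝ | ∃ v v' : M,
            (v ∈ N ∧ v ∈ unitary M) ∧ (v' ∈ N ∧ v' ∈ unitary M) ∧
            r = ‖u n * v - w * v'‖}) atTop (nhds 0) ↔
         Tendsto (fun n => sInf {r : ℝ | ∃ v v' : M,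
            (v ∈ N ∧ v ∈ unitary M) ∧ (v' ∈ N ∧ v' ∈ unitary M) ∧
            r = Real.sqrt ‖F (star (u n * v - w * v') * (u n * v - w * v'))‖}) atTop
            (nhds 0))) :=
  stmt11_general N F hFrange hFid hFpos hFbimod a ha0 ha1 hna hFa
end

section
/- Let M be a unital C*-algebra, N ⊆ M a unital C*-subalgebra, and F : M → N a conditional expectation. If a ∈ M satisfies 0 ≤ a ≤ 1 and ‖a‖ = 1, then for every b ∈ N one has ‖a − b‖ ≥ (1 − ‖F(a)‖)/2; in particular, the distance d(a, N) = inf{‖a − b‖ : b ∈ N} satisfies d(a, N) ≥ (1 − ‖F(a)‖)/2. -/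
lemma aux_norm_le_of_between {M : Type*} [CStarAlgebra M] [PartialOrder M] [StarOrderedRing M]
    {z : M} {c : ℝ} (hz : IsSelfAdjoint z) (hc : 0 ≤ c)
    (h1 : z ≤ algebraMap ℝ M c) (h2 : -(algebraMap ℝ M c) ≤ z) : ‖z‖ ≤ c := by
  obtain h | h := subsingleton_or_nontrivial M
  · simpa [Subsingleton.elim z 0] using hc
  obtain h | h := CStarAlgebra.norm_or_neg_norm_mem_spectrum hz
  · exact (le_algebraMap_iff_spectrum_le (R := ℝ) hz).mp h1 _ h
  · have h2' : algebraMap ℝ M (-c) ≤ z := by rwa [map_neg]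
    have := (algebraMap_le_iff_le_spectrum (R := ℝ) hz).mp h2' _ h
    linarith

theorem stmt12 {M : Type*} [CStarAlgebra M] [PartialOrder M] [StarOrderedRing M]
    -- `N` is a unital C*-subalgebra of `M`
    (N : StarSubalgebra ℂ M) (hNclosed : IsClosed (N : Set M))
    -- `F` is a conditional expectation onto `N`
    (F : M →ₗ[ℂ] M) (hFrange : ∀ x : M, F x ∈ N) (hFid : ∀ b ∈ N, F b = b)
    (hFpos : ∀ x : M, 0 ≤ x → 0 ≤ F x)
    (hFbimod : ∀ x : M, ∀ b ∈ N, ∀ c ∈ N, F (b * x * c) = b * F x * c)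
    (a : M) (ha0 : 0 ≤ a) (ha1 : a ≤ 1) (hna : ‖a‖ = 1) :
    (∀ b ∈ N, (1 - ‖F a‖) / 2 ≤ ‖a - b‖) ∧
    (1 - ‖F a‖) / 2 ≤ sInf {r : ℝ | ∃ b ∈ N, r = ‖a - b‖} := by
  have h1N : (1 : M) ∈ N := N.one_mem
  have hF1 : F 1 = 1 := hFid 1 h1N
  have hFalg : ∀ c : ℝ, F (algebraMap ℝ M c) = algebraMap ℝ M c := by
    intro c
    rw [Algebra.algebraMap_eq_smul_one, ← Complex.coe_smul, map_smul, hF1]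
  have hmono : ∀ x y : M, x ≤ y → F x ≤ F y := by
    intro x y hxy
    have := hFpos (y - x) (sub_nonneg.mpr hxy)
    rw [map_sub] at this
    exact sub_nonneg.mp this
  have haSA : IsSelfAdjoint a := .of_nonneg ha0
  have halgSA : ∀ c : ℝ, IsSelfAdjoint (algebraMap ℝ M c) := by
    intro c
    rw [IsSelfAdjoint, Algebra.algebraMap_eq_smul_one, star_smul, star_trivial, star_one]
  have key : ∀ b ∈ N, (1 - ‖F a‖) / 2 ≤ ‖a - b‖ := by
    intro b hb
    set b' : M := (2⁻¹ : ℂ) • (b + star b) with hb'def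
    have hbs : star b ∈ N := star_mem hb
    have hb'N : b' ∈ N := N.smul_mem (N.add_mem hb hbs) _
    have hab' : a - b' = (2⁻¹ : ℂ) • ((a - b) + star (a - b)) := by
      rw [star_sub, haSA.star_eq, hb'def]
      module
    have hstep1 : ‖a - b'‖ ≤ ‖a - b‖ := by
      rw [hab']
      calc ‖(2⁻¹ : ℂ) • ((a - b) + star (a - b))‖
          ≤ ‖(2⁻¹ : ℂ)‖ * (‖a - b‖ + ‖star (a - b)‖) := by
            rw [norm_smul]
            gcongr
            exact norm_add_le _ _
        _ = ‖a - b‖ := by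
            rw [norm_star]
            simp
            ring
    set y : M := a - b' with hydef
    have hySA : IsSelfAdjoint y := by
      rw [hab']
      rw [IsSelfAdjoint, star_smul, star_add, star_star,
        show star (2⁻¹ : ℂ) = 2⁻¹ by norm_num, add_comm]
    have hyub : F y ≤ algebraMap ℝ M ‖y‖ := by
      have := hmono y _ hySA.le_algebraMap_norm_self
      rwa [hFalg] at this
    have hylb : -(algebraMap ℝ M ‖y‖) ≤ F y := by
      have := hmono _ y hySA.neg_algebraMap_norm_le_self
      rwa [map_neg, hFalg] at this
    have hFySA : IsSelfAdjoint (F y) := by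
      have hp : 0 ≤ F (algebraMap ℝ M ‖y‖ - y) :=
        hFpos _ (sub_nonneg.mpr hySA.le_algebraMap_norm_self)
      have : F y = algebraMap ℝ M ‖y‖ - F (algebraMap ℝ M ‖y‖ - y) := by
        rw [map_sub F (algebraMap ℝ M ‖y‖) y, hFalg]; abel
      rw [this]
      exact (halgSA ‖y‖).sub (IsSelfAdjoint.of_nonneg hp)
    have hFy : ‖F y‖ ≤ ‖y‖ := aux_norm_le_of_between hFySA (norm_nonneg y) hyub hylb
    have hFa : F a = F y + b' := by
      rw [hydef, map_sub, hFid b' hb'N]; abel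
    have h1 : ‖b'‖ ≤ ‖F a‖ + ‖F y‖ := by
      have : b' = F a - F y := by rw [hFa]; abel
      rw [this]
      exact norm_sub_le _ _
    have h2 : (1 : ℝ) ≤ ‖y‖ + ‖b'‖ := by
      calc (1 : ℝ) = ‖a‖ := hna.symm
        _ = ‖y + b'‖ := by rw [hydef]; congr 1; abel
        _ ≤ ‖y‖ + ‖b'‖ := norm_add_le _ _
    have hyle : ‖y‖ ≤ ‖a - b‖ := hstep1
    linarith
  refine ⟨key, ?_⟩
  apply le_csInf
  · exact ⟨‖a - 0‖, 0, N.zero_mem, rfl⟩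
  · rintro r ⟨b, hb, rfl⟩
    exact key b hb
end

section
/- Let M be a unital C*-algebra, N ⊆ M a unital C*-subalgebra, E : M → N a conditional expectation, and u ∈ M a unitary such that E(u) is invertible in N. Then v := E(u*)·(E(u)E(u*))^{-1/2} is a unitary element of N, E(u)v = (E(u)E(u*))^{1/2}, and ‖uv − 1‖_E² = ‖E((uv−1)*(uv−1))‖ ≤ 2‖1 − (E(u)E(u*))^{1/2}‖. -/
/-!
Write `a = E u`. A positive `ℂ`-linear map commutes with `star`, so `E (star u) = star a`, and
`s = (a a*)^{1/2}` lies in the closed subalgebra `N` by spectral permanence; as `a a*` has inverse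
`y* y`, also `t = s⁻¹ = y* y s ∈ N`. Then `v = a* t` is the unitary part of the polar decomposition
of `a* = v s`. For the unitary `w = u v`, `(w - 1)*(w - 1) = (1 - w*) + (1 - w)`, and the bimodule
property gives `E w = E u * v = s`, so `E ((w - 1)*(w - 1)) = 2 (1 - s)`.
-/

section Polar

variable {R : Type*} [Monoid R] [StarMul R] {a y s t : R}

lemma star_mul_self_mul_eq_of_mul_self_eq (hya : y * a = 1) (hay : a * y = 1)
    (hss : s * s = a * star a) (hst : s * t = 1) : star y * y * s = t := by
  refine left_inv_eq_right_inv ?_ hst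
  rw [mul_assoc _ s, hss, mul_assoc, ← mul_assoc y, hya, one_mul, ← star_mul, hay, star_one]

lemma star_mul_mem_unitary_of_mul_self_eq (hya : y * a = 1) (hay : a * y = 1)
    (hs : IsSelfAdjoint s) (hss : s * s = a * star a) (hts : t * s = 1) (hst : s * t = 1) :
    star a * t ∈ unitary R := by
  have htt : t * t = star y * y := by
    nth_rw 1 [← star_mul_self_mul_eq_of_mul_self_eq hya hay hss hst]
    rw [mul_assoc, hst, mul_one]
  have hvstar : star (star a * t) = t * a := by
    have hts' : star t * s = 1 := by rw [← hs.star_eq, ← star_mul, hst, star_one]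
    rw [star_mul, left_inv_eq_right_inv hts' hst, star_star]
  refine Unitary.mem_iff.mpr ⟨?_, ?_⟩
  · calc star (star a * t) * (star a * t) = t * (a * star a) * t := by
          simp only [hvstar, mul_assoc]
      _ = 1 := by rw [← hss, ← mul_assoc, hts, one_mul, hst]
  · calc star a * t * star (star a * t) = star (y * a) * (y * a) := by
          simp only [hvstar, star_mul, mul_assoc, ← mul_assoc t t, htt]
      _ = 1 := by rw [hya, star_one, one_mul]

end Polar

lemma star_sub_one_mul_sub_one_of_mem_unitary {R : Type*} [Ring R] [StarRing R] {w : R}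
    (hw : w ∈ unitary R) : star (w - 1) * (w - 1) = (1 - star w) + (1 - w) := by
  rw [star_sub, star_one, sub_mul, mul_sub, mul_sub, Unitary.star_mul_self_of_mem hw]
  noncomm_ring

lemma CFC.sqrt_mem {A : Type*} [CStarAlgebra A] [PartialOrder A] [StarOrderedRing A]
    {S : StarSubalgebra ℂ A} (hS : IsClosed (S : Set A)) {a : A} (ha : a ∈ S) :
    CFC.sqrt a ∈ S := by
  by_cases ha₀ : 0 ≤ a
  · rw [CFC.sqrt_eq_real_sqrt a ha₀]
    exact cfcₙ_mem (𝕜 := ℝ) (𝕜' := ℂ) _ ha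
  · rw [CFC.sqrt_of_not_nonneg ha₀]
    exact S.zero_mem

theorem stmt16 {M : Type*} [CStarAlgebra M] [PartialOrder M] [StarOrderedRing M]
    -- `N` is a unital C*-subalgebra of `M`
    (N : StarSubalgebra ℂ M) (hNclosed : IsClosed (N : Set M))
    -- `E` is a conditional expectation onto `N`
    (E : M →ₗ[ℂ] M) (hErange : ∀ x : M, E x ∈ N) (hEid : ∀ b ∈ N, E b = b)
    (hEpos : ∀ x : M, 0 ≤ x → 0 ≤ E x)
    (hEbimod : ∀ x : M, ∀ b ∈ N, ∀ c ∈ N, E (b * x * c) = b * E x * c)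
    -- `u` is a unitary such that `E u` is invertible in `N`
    (u : M) (hu : u ∈ unitary M)
    (y : M) (hy : y ∈ N) (hyl : y * E u = 1) (hyr : E u * y = 1)
    -- `s` is the positive square root of `E u * E (star u)` and `t = s⁻¹`,
    -- so that `v = E (star u) * t` is the element `E(u*) (E(u) E(u*))^{-1/2}`
    (s : M) (hs : 0 ≤ s) (hss : s * s = E u * E (star u))
    (t : M) (hts : t * s = 1) (hst : s * t = 1) :
    -- `v` is a unitary element of `N`
    E (star u) * t ∈ N ∧
    E (star u) * t ∈ unitary M ∧
    -- `E u * v = (E u * E (star u))^{1/2}`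
    E u * (E (star u) * t) = s ∧
    -- `‖u v - 1‖_E ^ 2 = ‖E ((uv-1)* (uv-1))‖ ≤ 2 ‖1 - (E u E u*)^{1/2}‖`
    Real.sqrt ‖E (star (u * (E (star u) * t) - 1) * (u * (E (star u) * t) - 1))‖ ^ 2 =
      ‖E (star (u * (E (star u) * t) - 1) * (u * (E (star u) * t) - 1))‖ ∧
    ‖E (star (u * (E (star u) * t) - 1) * (u * (E (star u) * t) - 1))‖ ≤
      2 * ‖1 - s‖ := by
  have hEstar (x : M) : E (star x) = star (E x) := map_star (PositiveLinearMap.mk₀ E hEpos) x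
  rw [hEstar] at hss ⊢
  have hsN : s ∈ N := CFC.sqrt_unique hss hs ▸
    CFC.sqrt_mem hNclosed (mul_mem (hErange u) (star_mem (hErange u)))
  have htN : t ∈ N := star_mul_self_mul_eq_of_mul_self_eq hyl hyr hss hst ▸
    mul_mem (mul_mem (star_mem hy) hy) hsN
  have hvN : star (E u) * t ∈ N := mul_mem (star_mem (hErange u)) htN
  have hv := star_mul_mem_unitary_of_mul_self_eq hyl hyr hs.isSelfAdjoint hss hts hst
  have hav : E u * (star (E u) * t) = s := by rw [← mul_assoc, ← hss, mul_assoc, hst, mul_one]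
  have hEuv : E (u * (star (E u) * t)) = s := by
    simpa [hav] using hEbimod u 1 N.one_mem _ hvN
  refine ⟨hvN, hv, hav, Real.sq_sqrt (norm_nonneg _), ?_⟩
  rw [star_sub_one_mul_sub_one_of_mem_unitary (mul_mem hu hv), map_add, map_sub, map_sub,
    hEstar, hEuv, hEid 1 N.one_mem, hs.isSelfAdjoint.star_eq]
  exact (norm_add_le _ _).trans_eq (two_mul _).symm
end

section
/- Let M be a unital C*-algebra, N ⊆ M a unital C*-subalgebra, E : M → N a conditional expectation, and φ a state on M with φ∘E = φ. If (u_n) is a sequence of unitaries in M which is Cauchy with respect to the modular norm ‖·‖_E, then the sequence of states φ∘Ad(u_n*) (where (φ∘Ad(u_n*))(x) = φ(u_n* x u_n)) is Cauchy in the dual norm of M*, and hence converges in norm to a state ψ on M. -/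
/-!
In the GNS space of a state `φ`, `φ (u* x u) - φ (v* x v) = ⟪u - v, x u⟫ + ⟪v, x (u - v)⟫`, so by
Cauchy–Schwarz the functionals `φ ∘ Ad (u*)` and `φ ∘ Ad (v*)` are at distance at most
`2 ‖u - v‖_φ` in `M*` for unitaries `u, v`. When `φ ∘ E = φ`, `‖d‖_φ ^ 2 = φ (E (d* d)) ≤ ‖E (d* d)‖`,
so a `‖·‖_E`-Cauchy sequence of unitaries gives a norm-Cauchy sequence of states, whose limit in
the complete space `M*` is again a state because states form a closed set.
-/

open scoped ComplexOrder
open Filter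

/-- The continuous linear map `x ↦ u* x u` implementing `Ad (u*)` on states. -/
noncomputable def conjCLM {M : Type*} [CStarAlgebra M] (u : M) : M →L[ℂ] M :=
  (ContinuousLinearMap.mul ℂ M (star u)).comp ((ContinuousLinearMap.mul ℂ M).flip u)

open scoped InnerProductSpace

namespace PositiveLinearMap

variable {M : Type*} [CStarAlgebra M] [PartialOrder M] [StarOrderedRing M] (f : M →ₚ[ℂ] ℂ)

lemma norm_leftMulMapPreGNS_apply_le (a : M) (x : f.PreGNS) :
    ‖f.leftMulMapPreGNS a x‖ ≤ ‖a‖ * ‖x‖ :=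
  (f.leftMulMapPreGNS a).le_of_opNorm_le
    (LinearMap.mkContinuous_norm_le _ (norm_nonneg a) _) x

lemma norm_toPreGNS_of_mem_unitary (hf : f 1 = 1) {u : M} (hu : u ∈ unitary M) :
    ‖f.toPreGNS u‖ = 1 := by
  simp [preGNS_norm_def, Unitary.star_mul_self_of_mem hu, hf]

lemma norm_apply_conj_sub_apply_conj_le (hf : f 1 = 1) {u v : M} (hu : u ∈ unitary M)
    (hv : v ∈ unitary M) (x : M) :
    ‖f (star u * x * u) - f (star v * x * v)‖ ≤ 2 * ‖f.toPreGNS (u - v)‖ * ‖x‖ := by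
  have hsplit : f (star u * x * u) - f (star v * x * v) =
      ⟪f.toPreGNS (u - v), f.leftMulMapPreGNS x (f.toPreGNS u)⟫_ℂ +
        ⟪f.toPreGNS v, f.leftMulMapPreGNS x (f.toPreGNS (u - v))⟫_ℂ := by
    simp only [preGNS_inner_def, leftMulMapPreGNS_apply, ofPreGNS_toPreGNS, star_sub]
    rw [← map_add, ← map_sub]
    congr 1
    noncomm_ring
  rw [hsplit]
  set d := f.toPreGNS (u - v)
  calc _ ≤ ‖d‖ * (‖x‖ * ‖f.toPreGNS u‖) + ‖f.toPreGNS v‖ * (‖x‖ * ‖d‖) := by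
        refine (norm_add_le _ _).trans (add_le_add ?_ ?_) <;>
          refine (norm_inner_le_norm _ _).trans ?_ <;>
          gcongr <;> exact f.norm_leftMulMapPreGNS_apply_le _ _
    _ = 2 * ‖d‖ * ‖x‖ := by
        rw [f.norm_toPreGNS_of_mem_unitary hf hu, f.norm_toPreGNS_of_mem_unitary hf hv]; ring

end PositiveLinearMap

section States

variable {M : Type*} [CStarAlgebra M]

def IsState (φ : M →L[ℂ] ℂ) : Prop :=
  φ 1 = 1 ∧ ∀ x : M, 0 ≤ φ (star x * x)

lemma isClosed_setOf_isState : IsClosed {φ : M →L[ℂ] ℂ | IsState φ} := by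
  simp only [IsState, Set.ofPred_and, Set.ofPred_forall]
  refine (isClosed_eq (ContinuousLinearMap.apply ℂ ℂ (1 : M)).continuous continuous_const).inter ?_
  exact isClosed_iInter fun x =>
    isClosed_le continuous_const (ContinuousLinearMap.apply ℂ ℂ (star x * x)).continuous

namespace IsState

variable {φ : M →L[ℂ] ℂ}

lemma comp_conjCLM (hφ : IsState φ) {u : M} (hu : u ∈ unitary M) :
    IsState (φ.comp (conjCLM u)) := by
  refine ⟨by simp [conjCLM, Unitary.star_mul_self_of_mem hu, hφ.1], fun x => ?_⟩
  simpa [conjCLM, mul_assoc] using hφ.2 (x * u)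

variable [PartialOrder M] [StarOrderedRing M]

noncomputable def toPositiveLinearMap (hφ : IsState φ) : M →ₚ[ℂ] ℂ :=
  .mk₀ φ.toLinearMap fun z hz => by
    obtain ⟨b, rfl⟩ := CStarAlgebra.nonneg_iff_eq_star_mul_self.mp hz
    exact hφ.2 b

@[simp]
lemma toPositiveLinearMap_apply (hφ : IsState φ) (x : M) :
    hφ.toPositiveLinearMap x = φ x := rfl

lemma re_apply_le_norm (hφ : IsState φ) {z : M} (hz : 0 ≤ z) : (φ z).re ≤ ‖z‖ :=
  calc (φ z).re ≤ ‖φ z‖ := Complex.re_le_norm _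
    _ ≤ ‖z‖ := by simpa [hφ.1] using hφ.toPositiveLinearMap.norm_apply_le_of_nonneg z hz

lemma norm_comp_conjCLM_sub_le (hφ : IsState φ) {u v : M} (hu : u ∈ unitary M)
    (hv : v ∈ unitary M) :
    ‖φ.comp (conjCLM u) - φ.comp (conjCLM v)‖ ≤ 2 * √(φ (star (u - v) * (u - v))).re := by
  refine ContinuousLinearMap.opNorm_le_bound _ (by positivity) fun x => ?_
  have := hφ.toPositiveLinearMap.norm_apply_conj_sub_apply_conj_le hφ.1 hu hv x
  simp only [PositiveLinearMap.preGNS_norm_def, toPositiveLinearMap_apply,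
    PositiveLinearMap.ofPreGNS_toPreGNS] at this
  simpa [conjCLM, mul_assoc, mul_right_comm] using this

end IsState

end States

theorem stmt19_general {M : Type*} [CStarAlgebra M] [PartialOrder M] [StarOrderedRing M]
    -- `E` is a conditional expectation onto `N`
    (E : M →ₗ[ℂ] M)
    (hEpos : ∀ x : M, 0 ≤ x → 0 ≤ E x)
    -- `φ` is a state on `M` with `φ ∘ E = φ`
    (φ : M →L[ℂ] ℂ) (hφ1 : φ 1 = 1) (hφpos : ∀ x : M, 0 ≤ φ (star x * x))
    (hφE : ∀ x : M, φ (E x) = φ x)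
    -- a sequence of unitaries, Cauchy for the modular norm `‖·‖_E`
    (u : ℕ → M) (hu : ∀ n, u n ∈ unitary M)
    (hcauchy : ∀ ε : ℝ, 0 < ε → ∃ K : ℕ, ∀ m ≥ K, ∀ n ≥ K,
      Real.sqrt ‖E (star (u m - u n) * (u m - u n))‖ < ε) :
    -- the states `φ ∘ Ad (u n)*` form a Cauchy sequence in `M*`,
    -- converging in norm to a state `ψ`
    CauchySeq (fun n => φ.comp (conjCLM (u n))) ∧
    ∃ ψ : M →L[ℂ] ℂ, ψ 1 = 1 ∧ (∀ x : M, 0 ≤ ψ (star x * x)) ∧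
      Tendsto (fun n => φ.comp (conjCLM (u n))) atTop (nhds ψ) := by
  have hφ : IsState φ := ⟨hφ1, hφpos⟩
  have hdist (m n : ℕ) : dist (φ.comp (conjCLM (u m))) (φ.comp (conjCLM (u n))) ≤
      2 * √‖E (star (u m - u n) * (u m - u n))‖ := by
    rw [dist_eq_norm]
    refine (hφ.norm_comp_conjCLM_sub_le (hu m) (hu n)).trans ?_
    gcongr
    rw [← hφE]
    exact hφ.re_apply_le_norm (hEpos _ (star_mul_self_nonneg _))
  have hC : CauchySeq fun n => φ.comp (conjCLM (u n)) := by
    refine Metric.cauchySeq_iff.mpr fun ε hε => ?_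
    obtain ⟨K, hK⟩ := hcauchy (ε / 2) (half_pos hε)
    exact ⟨K, fun m hm n hn => (hdist m n).trans_lt (by linarith [hK m hm n hn])⟩
  obtain ⟨ψ, hψ⟩ := cauchySeq_tendsto_of_complete hC
  have hψ_state : IsState ψ :=
    isClosed_setOf_isState.mem_of_tendsto hψ (.of_forall fun n => hφ.comp_conjCLM (hu n))
  exact ⟨hC, ψ, hψ_state.1, hψ_state.2, hψ⟩

theorem stmt19 {M : Type*} [CStarAlgebra M] [PartialOrder M] [StarOrderedRing M]
    -- `N` is a unital C*-subalgebra of `M`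
    (N : StarSubalgebra ℂ M) (hNclosed : IsClosed (N : Set M))
    -- `E` is a conditional expectation onto `N`
    (E : M →ₗ[ℂ] M) (hErange : ∀ x : M, E x ∈ N) (hEid : ∀ b ∈ N, E b = b)
    (hEpos : ∀ x : M, 0 ≤ x → 0 ≤ E x)
    (hEbimod : ∀ x : M, ∀ b ∈ N, ∀ c ∈ N, E (b * x * c) = b * E x * c)
    -- `φ` is a state on `M` with `φ ∘ E = φ`
    (φ : M →L[ℂ] ℂ) (hφ1 : φ 1 = 1) (hφpos : ∀ x : M, 0 ≤ φ (star x * x))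
    (hφE : ∀ x : M, φ (E x) = φ x)
    -- a sequence of unitaries, Cauchy for the modular norm `‖·‖_E`
    (u : ℕ → M) (hu : ∀ n, u n ∈ unitary M)
    (hcauchy : ∀ ε : ℝ, 0 < ε → ∃ K : ℕ, ∀ m ≥ K, ∀ n ≥ K,
      Real.sqrt ‖E (star (u m - u n) * (u m - u n))‖ < ε) :
    -- the states `φ ∘ Ad (u n)*` form a Cauchy sequence in `M*`,
    -- converging in norm to a state `ψ`
    CauchySeq (fun n => φ.comp (conjCLM (u n))) ∧
    ∃ ψ : M →L[ℂ] ℂ, ψ 1 = 1 ∧ (∀ x : M, 0 ≤ ψ (star x * x)) ∧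
      Tendsto (fun n => φ.comp (conjCLM (u n))) atTop (nhds ψ) :=
  stmt19_general E hEpos φ hφ1 hφpos hφE u hu hcauchy
end
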